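/- Let b ∈ M_{m×n}(K) be the rank-r normal form (I_r in the upper-left block, zeros elsewhere). Then R := { x ∈ M_{n×m}(K) : the upper-left r×r block of x is a scalar matrix α I_r } is a solvable ideal of the Lie algebra (M_{n×m}(K), ⟦x,y⟧ = xby − ybx); more precisely, its derived series satisfies R^{(3)} = 0. -/

import Mathlib

/-!
Write `b` for the rank-`r` normal form. If the upper-left block of `y` is `α I_r`, then on that
block both `x b y` and `y b x` equal `α x`, so every bracket with an element of `R` has vanishing
upper-left block. For such `w, w'` the product `w b w' b` vanishes, because `(w b)_{il} = 0` for
`l ≥ r` and `(w' b)_{lj} = 0` for `j ≥ r`, while `w'_{lj} = 0` for `l, j < r`. Hence every element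
`u` of `R⁽²⁾` satisfies `u b = 0`, and any bracket of two such elements is `0`.
-/

open Matrix

section RankNormalForm

variable {K : Type*} {m n r : ℕ}

def rankNormalForm (K : Type*) [Zero K] [One K] (m n r : ℕ) : Matrix (Fin m) (Fin n) K :=
  of fun i j => if (i : ℕ) = j ∧ (i : ℕ) < r then 1 else 0

def IsUpperLeftScalar [Zero K] (r : ℕ) (x : Matrix (Fin n) (Fin m) K) (α : K) : Prop :=
  ∀ (i : Fin n) (j : Fin m), (i : ℕ) < r → (j : ℕ) < r → x i j = if (i : ℕ) = j then α else 0

theorem mul_rankNormalForm_apply [NonAssocSemiring K] {l : Type*} (hrm : r ≤ m)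
    (x : Matrix l (Fin m) K) (i : l) (j : Fin n) :
    (x * rankNormalForm K m n r) i j = if h : (j : ℕ) < r then x i ⟨j, h.trans_le hrm⟩ else 0 := by
  rw [mul_apply]
  split_ifs with hj
  · rw [Finset.sum_eq_single ⟨j, hj.trans_le hrm⟩]
    · simp [rankNormalForm, hj]
    · intro k _ hk
      simp only [rankNormalForm, of_apply, mul_ite, mul_one, mul_zero, ite_eq_right_iff, and_imp]
      exact fun hkj _ => absurd (Fin.ext hkj) hk
    · simp
  · refine Finset.sum_eq_zero fun k _ => ?_
    simp only [rankNormalForm, of_apply, mul_ite, mul_one, mul_zero, ite_eq_right_iff, and_imp]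
    exact fun hkj hk => absurd (hkj ▸ hk) hj

theorem mul_rankNormalForm_mul_mul_rankNormalForm_eq_zero [Semiring K] (hrm : r ≤ m)
    (w : Matrix (Fin n) (Fin m) K) {w' : Matrix (Fin n) (Fin m) K}
    (hw' : IsUpperLeftScalar r w' 0) :
    w * rankNormalForm K m n r * w' * rankNormalForm K m n r = 0 := by
  ext i j
  rw [mul_rankNormalForm_apply hrm, Matrix.zero_apply]
  split_ifs with hj
  · rw [mul_apply]
    refine Finset.sum_eq_zero fun l _ => ?_
    rw [mul_rankNormalForm_apply hrm]
    split_ifs with hl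
    · rw [hw' l _ hl hj, ite_self, mul_zero]
    · exact zero_mul _
  · rfl

variable [CommRing K]

theorem mul_rankNormalForm_mul_apply_of_isUpperLeftScalar (hrm : r ≤ m) (hrn : r ≤ n)
    (x : Matrix (Fin n) (Fin m) K) {y : Matrix (Fin n) (Fin m) K} {α : K}
    (hy : IsUpperLeftScalar r y α) {i : Fin n} {j : Fin m} (hj : (j : ℕ) < r) :
    (x * rankNormalForm K m n r * y) i j = x i j * α := by
  rw [mul_apply, Finset.sum_eq_single ⟨j, hj.trans_le hrn⟩]
  · rw [mul_rankNormalForm_apply hrm, dif_pos hj, hy _ j hj hj, if_pos rfl]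
  · intro l _ hl
    rw [mul_rankNormalForm_apply hrm]
    split_ifs with hlr
    · rw [hy l j hlr hj, if_neg fun h => hl (Fin.ext h), mul_zero]
    · exact zero_mul _
  · simp

theorem isUpperLeftScalar_mul_rankNormalForm_mul_apply (hrm : r ≤ m)
    (x : Matrix (Fin n) (Fin m) K) {y : Matrix (Fin n) (Fin m) K} {α : K}
    (hy : IsUpperLeftScalar r y α) {i : Fin n} (hi : (i : ℕ) < r) (j : Fin m) :
    (y * rankNormalForm K m n r * x) i j = α * x i j := by
  rw [mul_apply, Finset.sum_eq_single i]
  · rw [mul_rankNormalForm_apply hrm, dif_pos hi, hy i _ hi hi, if_pos rfl]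
  · intro l _ hl
    rw [mul_rankNormalForm_apply hrm]
    split_ifs with hlr
    · rw [hy i _ hi hlr, if_neg fun h => hl (Fin.ext h.symm), zero_mul]
    · exact zero_mul _
  · simp

theorem isUpperLeftScalar_zero_bracket (hrm : r ≤ m) (hrn : r ≤ n)
    (x : Matrix (Fin n) (Fin m) K) {y : Matrix (Fin n) (Fin m) K} {α : K}
    (hy : IsUpperLeftScalar r y α) :
    IsUpperLeftScalar r
      (x * rankNormalForm K m n r * y - y * rankNormalForm K m n r * x) 0 := by
  intro i j hi hj
  rw [Matrix.sub_apply, mul_rankNormalForm_mul_apply_of_isUpperLeftScalar hrm hrn x hy hj,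
    isUpperLeftScalar_mul_rankNormalForm_mul_apply hrm x hy hi, mul_comm, sub_self, ite_self]

theorem bracket_mul_rankNormalForm_eq_zero (hrm : r ≤ m) {w w' : Matrix (Fin n) (Fin m) K}
    (hw : IsUpperLeftScalar r w 0) (hw' : IsUpperLeftScalar r w' 0) :
    (w * rankNormalForm K m n r * w' - w' * rankNormalForm K m n r * w) *
      rankNormalForm K m n r = 0 := by
  rw [Matrix.sub_mul, mul_rankNormalForm_mul_mul_rankNormalForm_eq_zero hrm w hw',
    mul_rankNormalForm_mul_mul_rankNormalForm_eq_zero hrm w' hw, sub_self]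

end RankNormalForm

theorem R_solvable_ideal_general {K : Type*} [Field K] {m n r : ℕ}
    (hrm : r ≤ m) (hrn : r ≤ n)
    (b : Matrix (Fin m) (Fin n) K)
    (hb : ∀ i j, b i j = if ((i : ℕ) = (j : ℕ) ∧ (i : ℕ) < r) then 1 else 0)
    (br : Matrix (Fin n) (Fin m) K → Matrix (Fin n) (Fin m) K → Matrix (Fin n) (Fin m) K)
    (hbr : ∀ x y, br x y = x * b * y - y * b * x)
    (R : Set (Matrix (Fin n) (Fin m) K))
    (hR : R = {x | ∃ α : K, ∀ (i : Fin n) (j : Fin m), (i : ℕ) < r → (j : ℕ) < r →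
        x i j = if (i : ℕ) = (j : ℕ) then α else 0}) :
    (∀ x y, y ∈ R → br x y ∈ R) ∧
    (∀ x₁ ∈ R, ∀ x₂ ∈ R, ∀ x₃ ∈ R, ∀ x₄ ∈ R, ∀ x₅ ∈ R, ∀ x₆ ∈ R, ∀ x₇ ∈ R, ∀ x₈ ∈ R,
      br (br (br x₁ x₂) (br x₃ x₄)) (br (br x₅ x₆) (br x₇ x₈)) = 0) := by
  obtain rfl : b = rankNormalForm K m n r := ext hb
  have bracket_mem (x y) (hy : y ∈ R) : IsUpperLeftScalar r (br x y) 0 := by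
    rw [hbr]
    exact isUpperLeftScalar_zero_bracket hrm hrn x (hR ▸ hy).choose_spec
  refine ⟨fun x y hy => hR ▸ ⟨0, bracket_mem x y hy⟩, ?_⟩
  intro x₁ _ x₂ h₂ x₃ _ x₄ h₄ x₅ _ x₆ h₆ x₇ _ x₈ h₈
  have hu : br (br x₁ x₂) (br x₃ x₄) * rankNormalForm K m n r = 0 := by
    rw [hbr]
    exact bracket_mul_rankNormalForm_eq_zero hrm (bracket_mem _ _ h₂) (bracket_mem _ _ h₄)
  have hv : br (br x₅ x₆) (br x₇ x₈) * rankNormalForm K m n r = 0 := by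
    rw [hbr]
    exact bracket_mul_rankNormalForm_eq_zero hrm (bracket_mem _ _ h₆) (bracket_mem _ _ h₈)
  rw [hbr, hu, hv, Matrix.zero_mul, Matrix.zero_mul, sub_self]

/-- For `b` the rank-`r` normal form, the set `R` of matrices whose
upper-left `r×r` block is a scalar matrix `α·I_r` is a solvable ideal of
`(M_{n×m}(K), ⟦x,y⟧ = xby − ybx)`: indeed its derived series satisfies
`R⁽³⁾ = 0` (expressed on the spanning brackets by bilinearity). -/
theorem R_solvable_ideal {K : Type*} [Field K] [CharZero K] {m n r : ℕ}
    (hrm : r ≤ m) (hrn : r ≤ n)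
    (b : Matrix (Fin m) (Fin n) K)
    (hb : ∀ i j, b i j = if ((i : ℕ) = (j : ℕ) ∧ (i : ℕ) < r) then 1 else 0)
    (br : Matrix (Fin n) (Fin m) K → Matrix (Fin n) (Fin m) K → Matrix (Fin n) (Fin m) K)
    (hbr : ∀ x y, br x y = x * b * y - y * b * x)
    (R : Set (Matrix (Fin n) (Fin m) K))
    (hR : R = {x | ∃ α : K, ∀ (i : Fin n) (j : Fin m), (i : ℕ) < r → (j : ℕ) < r →
        x i j = if (i : ℕ) = (j : ℕ) then α else 0}) :
    (∀ x y, y ∈ R → br x y ∈ R) ∧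
    (∀ x₁ ∈ R, ∀ x₂ ∈ R, ∀ x₃ ∈ R, ∀ x₄ ∈ R, ∀ x₅ ∈ R, ∀ x₆ ∈ R, ∀ x₇ ∈ R, ∀ x₈ ∈ R,
      br (br (br x₁ x₂) (br x₃ x₄)) (br (br x₅ x₆) (br x₇ x₈)) = 0) :=
  R_solvable_ideal_general hrm hrn b hb br hbr R hR
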